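/- For every n ≥ 0, the number of eight-vertex model configurations on SG(n) is E(n) = 2^{3·(3^n+1)/2} (note 3^n+1 is even), and the entropy per site exists and equals ln 2, i.e. ln E(n)/v(n) → ln 2 as n → ∞, where v(n) = 3·(3^n+1)/2. -/

import Mathlib

/-- The sextuple of boundary counts `(g, pa, pb, pc, pd, r)` for the
eight-vertex model on the Sierpinski gasket `SG(n)`. -/
structure EVCounts where
  g : ℕ
  pa : ℕ
  pb : ℕ
  pc : ℕ
  pd : ℕ
  r : ℕ

/-- One step of the recursion for the eight-vertex model on `SG(n)`. -/
def evStep (s : EVCounts) : EVCounts :=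
  let g := s.g
  let pa := s.pa
  let pb := s.pb
  let pc := s.pc
  let pd := s.pd
  let r := s.r
  { g := 4*g^3 + 8*g^2*pa + 8*g^2*pb + 12*g^2*pc + 4*g^2*pd + 5*g*pa^2 + 5*g*pb^2
      + 10*g*pa*pb + 12*g*pa*pc + 4*g*pa*pd + 12*g*pb*pc + 4*g*pb*pd + 4*g^2*r
      + pa^3 + pb^3 + 3*pa^2*pb + 3*pa^2*pc + pa^2*pd + 3*pb^2*pa + 3*pb^2*pc
      + pb^2*pd + 6*pa*pb*pc + 2*pa*pb*pd + 4*g*pa*r + 4*g*pb*r + pa^2*r + pb^2*r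
      + 2*pa*pb*r
    pa := 2*g^2*pa + 2*g^2*pb + 3*g*pa^2 + 3*g*pb^2 + 6*g*pa*pb + 6*g*pa*pc
      + 2*g*pa*pd + 6*g*pb*pc + 2*g*pb*pd + 4*g^2*r + pa^3 + pb^3 + 3*pa^2*pb
      + 3*pa^2*pc + pa^2*pd + 3*pb^2*pa + 3*pb^2*pc + pb^2*pd + 6*pa*pb*pc
      + 2*pa*pb*pd + 8*g*pa*r + 8*g*pb*r + 12*g*pc*r + 4*g*pd*r + 3*pa^2*r
      + 3*pb^2*r + 6*pa*pb*r + 6*pa*pc*r + 2*pa*pd*r + 6*pb*pc*r + 2*pb*pd*r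
      + 4*g*r^2 + 2*pa*r^2 + 2*pb*r^2
    pb := 2*g^2*pa + 2*g^2*pb + 3*g*pa^2 + 3*g*pb^2 + 6*g*pa*pb + 6*g*pa*pc
      + 2*g*pa*pd + 6*g*pb*pc + 2*g*pb*pd + 4*g^2*r + pa^3 + pb^3 + 3*pa^2*pb
      + 3*pa^2*pc + pa^2*pd + 3*pb^2*pa + 3*pb^2*pc + pb^2*pd + 6*pa*pb*pc
      + 2*pa*pb*pd + 8*g*pa*r + 8*g*pb*r + 12*g*pc*r + 4*g*pd*r + 3*pa^2*r
      + 3*pb^2*r + 6*pa*pb*r + 6*pa*pc*r + 2*pa*pd*r + 6*pb*pc*r + 2*pb*pd*r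
      + 4*g*r^2 + 2*pa*r^2 + 2*pb*r^2
    pc := g^3 + 3*g^2*pa + 3*g^2*pb + 3*g*pa^2 + 3*g*pb^2 + 6*g*pa*pb + 3*g^2*r
      + pa^3 + pb^3 + 27*pc^3 + pd^3 + 3*pa^2*pb + 3*pb^2*pa + 27*pc^2*pd
      + 9*pd^2*pc + 6*g*pa*r + 6*g*pb*r + 3*pa^2*r + 3*pb^2*r + 6*pa*pb*r
      + 3*g*r^2 + 3*pa*r^2 + 3*pb*r^2 + r^3
    pd := g^3 + 3*g^2*pa + 3*g^2*pb + 3*g*pa^2 + 3*g*pb^2 + 6*g*pa*pb + 3*g^2*r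
      + pa^3 + pb^3 + 27*pc^3 + pd^3 + 3*pa^2*pb + 3*pb^2*pa + 27*pc^2*pd
      + 9*pd^2*pc + 6*g*pa*r + 6*g*pb*r + 3*pa^2*r + 3*pb^2*r + 6*pa*pb*r
      + 3*g*r^2 + 3*pa*r^2 + 3*pb*r^2 + r^3
    r := g*pa^2 + g*pb^2 + 2*g*pa*pb + pa^3 + pb^3 + 3*pa^2*pb + 3*pa^2*pc
      + pa^2*pd + 3*pb^2*pa + 3*pb^2*pc + pb^2*pd + 6*pa*pb*pc + 2*pa*pb*pd
      + 4*g*pa*r + 4*g*pb*r + 5*pa^2*r + 5*pb^2*r + 10*pa*pb*r + 12*pa*pc*r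
      + 4*pa*pd*r + 12*pb*pc*r + 4*pb*pd*r + 4*g*r^2 + 8*pa*r^2 + 8*pb*r^2
      + 12*pc*r^2 + 4*pd*r^2 + 4*r^3 }

/-- The eight-vertex boundary counts at stage `n`. -/
def evSeq : ℕ → EVCounts
  | 0 => ⟨0, 0, 1, 0, 1, 0⟩
  | n + 1 => evStep (evSeq n)

def evg (n : ℕ) : ℕ := (evSeq n).g
def evpa (n : ℕ) : ℕ := (evSeq n).pa
def evpb (n : ℕ) : ℕ := (evSeq n).pb
def evpc (n : ℕ) : ℕ := (evSeq n).pc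
def evpd (n : ℕ) : ℕ := (evSeq n).pd
def evr (n : ℕ) : ℕ := (evSeq n).r

/-- The total number of eight-vertex model configurations on `SG(n)`. -/
def evE (n : ℕ) : ℕ :=
  6 * evg n + 6 * evpa n + 6 * evpb n + 6 * evpc n + 2 * evpd n + 6 * evr n

/-- The number of vertices of `SG(n)` (the division is exact). -/
def vSG (n : ℕ) : ℕ := 3 * (3 ^ n + 1) / 2


/-!
After one step of the recursion all six boundary counts coincide, and the recursion maps a
constant sextuple `(x, …, x)` to `(128 x³, …, 128 x³)`, since every component of `evStep` is a
cubic form whose coefficients sum to `128`. Starting from `evSeq 1 = (2, …, 2)`, the common value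
at stage `n + 1` is `2 ^ (vSG (n + 1) - 5)`, because `vSG (n + 1) = 3 vSG n - 3`; the total
`evE` of a constant sextuple is `32 x`, whence `evE n = 2 ^ vSG n`. The entropy per site
`log (evE n) / vSG n` is then identically `log 2`.
-/

namespace EVCounts

def const (x : ℕ) : EVCounts := ⟨x, x, x, x, x, x⟩

end EVCounts

open EVCounts

theorem evStep_const (x : ℕ) : evStep (const x) = const (128 * x ^ 3) := by
  simp only [evStep, const, EVCounts.mk.injEq]
  refine ⟨?_, ?_, ?_, ?_, ?_, ?_⟩ <;> ring

theorem evSeq_one : evSeq 1 = const 2 := rfl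

theorem two_mul_vSG (n : ℕ) : 2 * vSG n = 3 * (3 ^ n + 1) := by
  have h3 : Odd (3 ^ n) := Odd.pow (by decide)
  obtain ⟨k, hk⟩ := h3
  simp only [vSG, hk]
  omega

theorem three_le_vSG (n : ℕ) : 3 ≤ vSG n := by
  have := two_mul_vSG n
  have := Nat.one_le_pow n 3 (by norm_num)
  omega

theorem vSG_succ_add_three (n : ℕ) : vSG (n + 1) + 3 = 3 * vSG n := by
  have h₀ := two_mul_vSG n
  have h₁ := two_mul_vSG (n + 1)
  rw [pow_succ] at h₁
  omega

theorem evSeq_succ (n : ℕ) : evSeq (n + 1) = const (2 ^ (vSG (n + 1) - 5)) := by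
  induction n with
  | zero => exact evSeq_one
  | succ n ih =>
    have hv := vSG_succ_add_three (n + 1)
    have hv' := vSG_succ_add_three n
    have h₃ := three_le_vSG n
    rw [evSeq, ih, evStep_const, ← pow_mul, show 128 = 2 ^ 7 from rfl, ← pow_add]
    congr 2
    omega

theorem evE_eq_two_pow_vSG (n : ℕ) : evE n = 2 ^ vSG n := by
  cases n with
  | zero => rfl
  | succ n =>
    have h₅ : 5 ≤ vSG (n + 1) := by
      have := vSG_succ_add_three n
      have := three_le_vSG n
      omega
    simp only [evE, evg, evpa, evpb, evpc, evpd, evr, evSeq_succ, const]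
    rw [← Nat.sub_add_cancel h₅, pow_add, Nat.add_sub_cancel]
    ring

theorem stmt_17 :
    (∀ n : ℕ, evE n = 2 ^ (3 * (3 ^ n + 1) / 2)) ∧
    Filter.Tendsto (fun n => Real.log (evE n) / (vSG n : ℝ))
      Filter.atTop (nhds (Real.log 2)) := by
  refine ⟨evE_eq_two_pow_vSG, ?_⟩
  have hentropy (n : ℕ) : Real.log (evE n) / (vSG n : ℝ) = Real.log 2 := by
    have hv : (vSG n : ℝ) ≠ 0 := Nat.cast_ne_zero.mpr (by have := three_le_vSG n; omega)
    rw [evE_eq_two_pow_vSG, Nat.cast_pow, Nat.cast_ofNat, Real.log_pow, mul_div_cancel_left₀ _ hv]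
  simpa only [hentropy] using tendsto_const_nhds
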